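/- arXiv:2211.02407 — 4 statements merged into one kernel-verified Lean document; each statement's English description precedes it below -/
import Mathlib

section
/- Dwass's formula: Let T be a Galton–Watson tree with offspring distribution given by a probability mass function p on ℕ, let ξ_1, ξ_2, ... be i.i.d. with distribution P(ξ_i = k) = p(k+1) for k ≥ -1 (i.e., ξ_i is the offspring count minus one), and set S_n = ξ_1 + ... + ξ_n. Then P(T has exactly n vertices) = (1/n)·P(S_n = -1). -/
/-!
Depth-first exploration encodes a plane tree by its Łukasiewicz code, the list of the numbers of
children of its vertices in preorder. This is a bijection from trees with `n` vertices onto the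
lists `x` of length `n` whose path `k ↦ ∑_{i<k} (x_i - 1)` stays nonnegative for `k < n` and ends
at `-1`, and it turns the weight of a tree into `∏ p (x_i)`. By the cycle lemma, exactly one of
the `n` rotations of a list of length `n` with sum `n - 1` is such a code: the rotation starting
at the first minimum of the path. Rotations preserve `∏ p (x_i)`, so the sum over all lists of
length `n` with sum `n - 1` counts the weight of every tree with `n` vertices exactly `n` times.
-/

/-- Locally finite rooted plane trees. -/
inductive PlaneTree : Type
  | node : List PlaneTree → PlaneTree

namespace PlaneTree

/-- Number of vertices of a plane tree. -/
def size : PlaneTree → ℕ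
  | node ts => 1 + (ts.attach.map fun t => size t.1).sum
decreasing_by
  simp_wf
  have := List.sizeOf_lt_of_mem t.2
  try simp only [PlaneTree.node.sizeOf_spec] at *
  omega

/-- Galton–Watson weight of a tree: product over all vertices of `p (number of
children)`.  For an offspring pmf `p`, this is the probability that the
Galton–Watson tree equals the given tree. -/
def weight (p : ℕ → ℝ) : PlaneTree → ℝ
  | node ts => p ts.length * (ts.attach.map fun t => weight p t.1).prod
decreasing_by
  simp_wf
  have := List.sizeOf_lt_of_mem t.2
  try simp only [PlaneTree.node.sizeOf_spec] at *
  omega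

end PlaneTree

/-- `IsForestCode m l`: the Łukasiewicz path `m + ∑_{i<k} (l[i] - 1)` stays positive for
`k < l.length` and reaches `0` at `k = l.length`. -/
def IsForestCode (m : ℕ) (l : List ℕ) : Prop :=
  l.sum + m = l.length ∧ ∀ k < l.length, k < (l.take k).sum + m

instance (m : ℕ) : DecidablePred (IsForestCode m) := fun _ => inferInstanceAs (Decidable (_ ∧ _))

namespace IsForestCode

theorem nil : IsForestCode 0 [] := ⟨rfl, by simp⟩

theorem append {a b : ℕ} {l₁ l₂ : List ℕ} (h₁ : IsForestCode a l₁) (h₂ : IsForestCode b l₂) :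
    IsForestCode (a + b) (l₁ ++ l₂) := by
  have := h₁.1
  have := h₂.1
  refine ⟨by simp only [List.sum_append, List.length_append]; omega, fun k hk => ?_⟩
  rcases lt_or_ge k l₁.length with hk₁ | hk₁
  · have := h₁.2 k hk₁
    rw [List.take_append_of_le_length hk₁.le]
    omega
  · obtain ⟨k, rfl⟩ := Nat.exists_eq_add_of_le hk₁
    have := h₂.2 k (by simp only [List.length_append] at hk; omega)
    rw [List.take_length_add_append, List.sum_append]
    omega

theorem cons {c : ℕ} {l : List ℕ} (h : IsForestCode c l) : IsForestCode 1 (c :: l) := by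
  refine ⟨by simp only [List.sum_cons, List.length_cons]; have := h.1; omega, fun k hk => ?_⟩
  rcases k with _ | k
  · simp
  · have := h.2 k (by simpa using hk)
    simp only [List.take_succ_cons, List.sum_cons]
    omega

theorem tail {m c : ℕ} {l : List ℕ} (h : IsForestCode m (c :: l)) :
    0 < m ∧ IsForestCode (m - 1 + c) l := by
  have hm : 0 < m := by simpa using h.2 0 (by simp)
  refine ⟨hm, by have := h.1; simp only [List.sum_cons, List.length_cons] at this; omega,
    fun k hk => ?_⟩
  have := h.2 (k + 1) (by simpa using hk)
  simp only [List.take_succ_cons, List.sum_cons] at this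
  omega

end IsForestCode

namespace PlaneTree

theorem size_node (ts : List PlaneTree) : size (node ts) = 1 + (ts.map size).sum := by
  rw [size]; simp

theorem weight_node (p : ℕ → ℝ) (ts : List PlaneTree) :
    weight p (node ts) = p ts.length * (ts.map (weight p)).prod := by
  rw [weight]; simp

theorem size_pos (t : PlaneTree) : 0 < t.size := by
  cases t; rw [size_node]; omega

def code : PlaneTree → List ℕ
  | node ts => ts.length :: (ts.attach.map fun t => code t.1).flatten
decreasing_by
  simp_wf
  have := List.sizeOf_lt_of_mem t.2
  omega

def forestCode (ts : List PlaneTree) : List ℕ := (ts.map code).flatten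

@[simp]
theorem forestCode_nil : forestCode [] = [] := rfl

@[simp]
theorem forestCode_cons (t : PlaneTree) (ts : List PlaneTree) :
    forestCode (t :: ts) = code t ++ forestCode ts := rfl

theorem forestCode_append (a b : List PlaneTree) :
    forestCode (a ++ b) = forestCode a ++ forestCode b := by
  simp [forestCode]

theorem code_node (ts : List PlaneTree) : code (node ts) = ts.length :: forestCode ts := by
  rw [code]; simp [forestCode]

theorem forestCode_singleton (t : PlaneTree) : forestCode [t] = code t := by simp

theorem length_forestCode : ∀ ts : List PlaneTree, (forestCode ts).length = (ts.map size).sum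
  | [] => rfl
  | node cs :: ts => by
    simp only [forestCode_cons, code_node, List.length_append, List.length_cons,
      length_forestCode cs, length_forestCode ts, List.map_cons, List.sum_cons, size_node]
    omega

theorem length_code (t : PlaneTree) : (code t).length = t.size := by
  simpa using length_forestCode [t]

theorem prod_map_forestCode (p : ℕ → ℝ) :
    ∀ ts : List PlaneTree, ((forestCode ts).map p).prod = (ts.map (weight p)).prod
  | [] => rfl
  | node cs :: ts => by
    simp only [forestCode_cons, code_node, List.map_append, List.map_cons, List.prod_append,
      List.prod_cons, prod_map_forestCode p cs, prod_map_forestCode p ts, weight_node]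

theorem prod_map_code (p : ℕ → ℝ) (t : PlaneTree) : ((code t).map p).prod = weight p t := by
  simpa using prod_map_forestCode p [t]

theorem isForestCode_forestCode :
    ∀ ts : List PlaneTree, IsForestCode ts.length (forestCode ts)
  | [] => IsForestCode.nil
  | node cs :: ts => by
    rw [forestCode_cons, code_node, List.length_cons, add_comm]
    exact (isForestCode_forestCode cs).cons.append (isForestCode_forestCode ts)

theorem isForestCode_code (t : PlaneTree) : IsForestCode 1 (code t) := by
  simpa using isForestCode_forestCode [t]

theorem forestCode_append_inj : ∀ (a b : List PlaneTree) {r s : List ℕ}, a.length = b.length →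
    forestCode a ++ r = forestCode b ++ s → a = b ∧ r = s
  | [], [], _, _, _, h => ⟨rfl, h⟩
  | [], _ :: _, _, _, hlen, _ | _ :: _, [], _, _, hlen, _ => by simp at hlen
  | node cs :: a, node ds :: b, r, s, hlen, h => by
    simp only [forestCode_cons, code_node, List.cons_append, List.append_assoc,
      List.cons.injEq] at h
    obtain ⟨rfl, h'⟩ := forestCode_append_inj cs ds h.1 h.2
    obtain ⟨rfl, rfl⟩ := forestCode_append_inj a b (by simpa using hlen) h'
    exact ⟨rfl, rfl⟩

theorem code_injective : Function.Injective code := fun t u h => by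
  simpa using (forestCode_append_inj [t] [u] (r := []) (s := []) rfl (by simp [h])).1

theorem exists_forestCode_eq : ∀ {m : ℕ} {l : List ℕ}, IsForestCode m l →
    ∃ ts : List PlaneTree, ts.length = m ∧ forestCode ts = l
  | m, [], h => ⟨[], by simpa using h.1.symm, rfl⟩
  | m, c :: l, h => by
    obtain ⟨hm, hl⟩ := h.tail
    obtain ⟨ts, hlen, rfl⟩ := exists_forestCode_eq hl
    -- the first `c` trees of the decoded tail become the children of the root
    refine ⟨node (ts.take c) :: ts.drop c, by simp; omega, ?_⟩
    rw [forestCode_cons, code_node, List.length_take_of_le (by omega), List.cons_append,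
      ← forestCode_append, List.take_append_drop]

theorem exists_code_eq {l : List ℕ} (h : IsForestCode 1 l) : ∃ t : PlaneTree, code t = l := by
  obtain ⟨ts, hlen, rfl⟩ := exists_forestCode_eq h
  obtain ⟨t, rfl⟩ := List.length_eq_one_iff.1 hlen
  exact ⟨t, (forestCode_singleton t).symm⟩

end PlaneTree

theorem existsUnique_forall_le_add {H : ℕ → ℤ} {n : ℕ} (hn : 0 < n)
    (hH : ∀ m < n, H (m + n) = H m - 1) : ∃! j, j < n ∧ ∀ k < n, H j ≤ H (j + k) := by
  -- `j` is the first time at which `H` attains its minimum on `[0, n)`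
  obtain ⟨j, hj, hmin⟩ := (Finset.range n).exists_min_image (fun i => toLex (H i, i))
    ⟨0, Finset.mem_range.2 hn⟩
  rw [Finset.mem_range] at hj
  have hle : ∀ i < n, H j ≤ H i := fun i hi => by
    have := Prod.Lex.toLex_le_toLex.1 (hmin i (Finset.mem_range.2 hi))
    omega
  have hlt : ∀ i < j, H j < H i := fun i hi => by
    have := Prod.Lex.toLex_le_toLex.1 (hmin i (Finset.mem_range.2 (hi.trans hj)))
    omega
  refine ⟨j, ⟨hj, fun k hk => ?_⟩, fun j' ⟨hj', hvalid'⟩ => ?_⟩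
  · rcases lt_or_ge (j + k) n with h | h
    · exact hle _ h
    · obtain ⟨m, hm⟩ : ∃ m, j + k = m + n := ⟨j + k - n, by omega⟩
      have := hlt m (by omega)
      rw [hm, hH m (by omega)]
      omega
  · rcases lt_trichotomy j' j with h | h | h
    · have := hvalid' (j - j') (by omega)
      rw [Nat.add_sub_cancel' h.le] at this
      exact absurd (hlt j' h) this.not_gt
    · exact h
    · have := hvalid' (j + n - j') (by omega)
      rw [Nat.add_sub_cancel' (by omega), hH j hj] at this
      have := hle j' hj'
      omega

namespace List

/-- Doubling the list makes the increments after time `j ≤ l.length` those of `l.rotate j`. -/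
def cyclicWalk (l : List ℕ) (m : ℕ) : ℤ := ((l ++ l).take m).sum - m

theorem sum_take_append_self_add {l : List ℕ} {j k : ℕ} (hj : j ≤ l.length) (hk : k ≤ l.length) :
    ((l ++ l).take (j + k)).sum = ((l ++ l).take j).sum + ((l.rotate j).take k).sum := by
  rw [List.take_add, List.sum_append, List.drop_append_of_le_length hj,
    List.rotate_eq_drop_append_take hj]
  congr 2
  rw [List.take_append, List.take_append, List.take_take, min_eq_left (by simp; omega)]

theorem cyclicWalk_add_length {l : List ℕ} {m : ℕ} (hm : m ≤ l.length) :
    l.cyclicWalk (m + l.length) = l.cyclicWalk m + l.sum - l.length := by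
  rw [cyclicWalk, cyclicWalk, List.take_append, List.take_of_length_le (by omega),
    Nat.add_sub_cancel, List.take_append_of_le_length hm, List.sum_append]
  push_cast
  ring

theorem isForestCode_one_rotate_iff {l : List ℕ} (hl : l.sum + 1 = l.length) {j : ℕ}
    (hj : j ≤ l.length) :
    IsForestCode 1 (l.rotate j) ↔ ∀ k < l.length, l.cyclicWalk j ≤ l.cyclicWalk (j + k) := by
  simp only [IsForestCode, List.length_rotate, (l.rotate_perm j).sum_eq, hl, true_and]
  refine forall₂_congr fun k hk => ?_
  rw [cyclicWalk, cyclicWalk, sum_take_append_self_add hj hk.le]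
  omega

theorem existsUnique_isForestCode_rotate {l : List ℕ} (hl : l.sum + 1 = l.length) :
    ∃! j, j < l.length ∧ IsForestCode 1 (l.rotate j) := by
  have hH : ∀ m < l.length, l.cyclicWalk (m + l.length) = l.cyclicWalk m - 1 := fun m hm => by
    rw [cyclicWalk_add_length hm.le]
    omega
  refine (existsUnique_congr fun j => ?_).2 (existsUnique_forall_le_add (by omega) hH)
  exact and_congr_right fun hj => isForestCode_one_rotate_iff hl hj.le

end List

theorem Finset.sum_eq_nsmul_sum_filter_of_existsUnique_rotate {α M : Type*} [AddCommMonoid M]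
    {s : Finset (List α)} {n : ℕ} (P : List α → Prop) [DecidablePred P] (w : List α → M)
    (hrot : ∀ l ∈ s, ∀ j, l.rotate j ∈ s) (hP : ∀ l ∈ s, ∃! j, j < n ∧ P (l.rotate j))
    (hw : ∀ l j, w (l.rotate j) = w l) :
    ∑ l ∈ s, w l = n • ∑ l ∈ s.filter P, w l := by
  classical
  have hfiber :
      ∀ l ∈ s, ∑ j ∈ range n, (if P (l.rotate j) then w (l.rotate j) else 0) = w l := by
    intro l hl
    obtain ⟨j, ⟨hj, hPj⟩, huniq⟩ := hP l hl
    rw [Finset.sum_eq_single_of_mem j (Finset.mem_range.2 hj) fun i hi hij =>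
      if_neg fun hPi => hij (huniq i ⟨Finset.mem_range.1 hi, hPi⟩), if_pos hPj, hw]
  have hperm : ∀ j, s.image (·.rotate j) = s := fun j =>
    Finset.eq_of_subset_of_card_le (Finset.image_subset_iff.2 fun l hl => hrot l hl j)
      (Finset.card_image_of_injective _ (List.rotate_injective j)).ge
  calc ∑ l ∈ s, w l
      = ∑ l ∈ s, ∑ j ∈ range n, if P (l.rotate j) then w (l.rotate j) else 0 :=
        (Finset.sum_congr rfl hfiber).symm
    _ = ∑ j ∈ range n, ∑ l ∈ s, if P (l.rotate j) then w (l.rotate j) else 0 := Finset.sum_comm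
    _ = ∑ j ∈ range n, ∑ l ∈ s, if P l then w l else 0 := by
        refine Finset.sum_congr rfl fun j _ => ?_
        conv_rhs => rw [← hperm j]
        exact (Finset.sum_image (f := fun l => if P l then w l else 0)
          fun l _ l' _ h => List.rotate_injective j h).symm
    _ = n • ∑ l ∈ s.filter P, w l := by rw [Finset.sum_const, Finset.card_range, Finset.sum_filter]

def listsWithSum (k s : ℕ) : Finset (List ℕ) := (Finset.Nat.antidiagonalTuple k s).image List.ofFn

theorem mem_listsWithSum {k s : ℕ} {l : List ℕ} :
    l ∈ listsWithSum k s ↔ l.length = k ∧ l.sum = s := by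
  simp only [listsWithSum, Finset.mem_image, Finset.Nat.mem_antidiagonalTuple]
  constructor
  · rintro ⟨f, hf, rfl⟩
    exact ⟨List.length_ofFn, by rw [List.sum_ofFn, hf]⟩
  · rintro ⟨rfl, rfl⟩
    exact ⟨fun i => l[(i : ℕ)], by rw [← List.sum_ofFn, List.ofFn_getElem], List.ofFn_getElem⟩

theorem rotate_mem_listsWithSum {k s : ℕ} {l : List ℕ} (hl : l ∈ listsWithSum k s) (j : ℕ) :
    l.rotate j ∈ listsWithSum k s := by
  rw [mem_listsWithSum] at hl ⊢
  rwa [List.length_rotate, (l.rotate_perm j).sum_eq]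

theorem tsum_ite_sum_eq_sum_listsWithSum {R : Type*} [CommSemiring R] [TopologicalSpace R]
    (p : ℕ → R) (k s : ℕ) :
    ∑' f : Fin k → ℕ, (if ∑ i, f i = s then ∏ i, p (f i) else 0)
      = ∑ l ∈ listsWithSum k s, (l.map p).prod := by
  rw [tsum_eq_sum (s := Finset.Nat.antidiagonalTuple k s) fun f hf =>
      if_neg (Finset.Nat.mem_antidiagonalTuple.not.1 hf), listsWithSum,
    Finset.sum_image fun f _ g _ h => List.ofFn_injective h]
  refine Finset.sum_congr rfl fun f hf => ?_
  rw [if_pos (Finset.Nat.mem_antidiagonalTuple.1 hf), List.map_ofFn, List.prod_ofFn]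
  rfl

theorem mem_filter_isForestCode {n : ℕ} {l : List ℕ} :
    l ∈ (listsWithSum n (n - 1)).filter (IsForestCode 1) ↔ IsForestCode 1 l ∧ l.length = n := by
  rw [Finset.mem_filter, mem_listsWithSum]
  exact ⟨fun ⟨⟨hlen, _⟩, h⟩ => ⟨h, hlen⟩, fun ⟨h, hlen⟩ => ⟨⟨hlen, by have := h.1; omega⟩, h⟩⟩

namespace PlaneTree

noncomputable def codeEquiv (n : ℕ) :
    {t : PlaneTree // t.size = n} ≃ {l // l ∈ (listsWithSum n (n - 1)).filter (IsForestCode 1)} :=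
  Equiv.ofBijective
    (fun t => ⟨code t.1,
      mem_filter_isForestCode.2 ⟨isForestCode_code t.1, by rw [length_code, t.2]⟩⟩)
    ⟨fun t u h => Subtype.ext (code_injective (congrArg Subtype.val h)), fun l => by
      obtain ⟨hcode, hlen⟩ := mem_filter_isForestCode.1 l.2
      obtain ⟨t, ht⟩ := exists_code_eq hcode
      exact ⟨⟨t, by rw [← length_code, ht, hlen]⟩, Subtype.ext ht⟩⟩

theorem tsum_weight_eq_sum_filter_isForestCode (p : ℕ → ℝ) (n : ℕ) :
    ∑' t : {t : PlaneTree // t.size = n}, weight p t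
      = ∑ l ∈ (listsWithSum n (n - 1)).filter (IsForestCode 1), (l.map p).prod := by
  simp only [← prod_map_code p]
  rw [← Finset.tsum_subtype]
  exact (codeEquiv n).tsum_eq (fun l => (l.1.map p).prod)

end PlaneTree

/-- The left-hand side is the total Galton–Watson weight of the trees with `n` vertices, and
`P(S_n = -1)` is written as the sum over offspring vectors `f : Fin n → ℕ` with `∑ f i = n - 1`
of `∏ p (f i)`. -/
theorem dwass_formula_general (p : ℕ → ℝ) (n : ℕ) :
    ∑' t : {t : PlaneTree // t.size = n}, PlaneTree.weight p t.1
      = (1 / (n : ℝ)) * ∑' f : Fin n → ℕ,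
          (if (∑ i, f i) + 1 = n then ∏ i, p (f i) else 0) := by
  rcases n with _ | m
  · have : IsEmpty {t : PlaneTree // t.size = 0} := ⟨fun t => (PlaneTree.size_pos t.1).ne' t.2⟩
    simp
  · have hcycle := Finset.sum_eq_nsmul_sum_filter_of_existsUnique_rotate
      (s := listsWithSum (m + 1) m) (n := m + 1) (IsForestCode 1)
      (fun l => (l.map p).prod) (fun l hl => rotate_mem_listsWithSum hl) (fun l hl => by
        obtain ⟨hlen, hsum⟩ := mem_listsWithSum.1 hl
        simpa only [hlen] using List.existsUnique_isForestCode_rotate (l := l) (by omega))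
      fun l j => ((l.rotate_perm j).map p).prod_eq
    simp only [Nat.add_right_cancel_iff]
    rw [PlaneTree.tsum_weight_eq_sum_filter_isForestCode, tsum_ite_sum_eq_sum_listsWithSum, hcycle,
      nsmul_eq_mul, Nat.add_sub_cancel]
    field_simp

/-- Dwass's formula. For a Galton–Watson tree `T` with offspring
pmf `p`, `P(T has n vertices) = (1/n) P(S_n = -1)` where `S_n = ξ_1 + ⋯ + ξ_n`
and the `ξ_i` are i.i.d. with `P(ξ = k) = p (k+1)`.  Here the left-hand side is
the total weight of plane trees with `n` vertices, and `P(S_n = -1)` is written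
as the sum over offspring vectors `f : Fin n → ℕ` with `∑ f i = n - 1` of
`∏ p (f i)`. -/
theorem dwass_formula (p : ℕ → ℝ) (hp : ∀ k, 0 ≤ p k) (hsum : ∑' k, p k = 1)
    (n : ℕ) (hn : 1 ≤ n) :
    ∑' t : {t : PlaneTree // t.size = n}, PlaneTree.weight p t.1
      = (1 / (n : ℝ)) * ∑' f : Fin n → ℕ,
          (if (∑ i, f i) + 1 = n then ∏ i, p (f i) else 0) :=
  dwass_formula_general p n
end

section
/- Cycle lemma (Dvoretzky–Motzkin): Let k_1, ..., k_n be integers each ≥ -1 with k_1 + ... + k_n = -1. Then there is exactly one cyclic shift σ of {1, ..., n} such that the partial sums of (k_{σ(1)}, ..., k_{σ(n)}) satisfy S_i ≥ 0 for all 1 ≤ i ≤ n-1 and S_n = -1. -/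
/-!
Extend the sequence periodically and let `T m = k₀ + ⋯ + k_{m-1}` (indices mod `n`), so that
`T (m + n) = T m - 1`. The rotation starting at `r` is admissible iff `T r ≤ T (r + i)` for
`0 ≤ i < n`. The first minimiser `r` of `T` on `[0, n)` is admissible: past `n` the values drop by
one, but before `r` they exceeded `T r` by at least one. Two admissible `a < b` are impossible,
since `T a ≤ T b ≤ T (a + n) < T a`.
-/

open Finset

section FirstMinimum

variable {α : Type*} {n : ℕ}

theorem exists_first_min_lt [LinearOrder α] (f : ℕ → α) (hn : 0 < n) :
    ∃ r < n, (∀ j < n, f r ≤ f j) ∧ ∀ j < r, f r < f j := by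
  have hmin : ∃ m, m < n ∧ ∀ j < n, f m ≤ f j := by
    obtain ⟨m, hm, hle⟩ := exists_min_image (range n) f ⟨0, mem_range.2 hn⟩
    exact ⟨m, mem_range.1 hm, fun j hj => hle j (mem_range.2 hj)⟩
  obtain ⟨hrn, hrmin⟩ := Nat.find_spec hmin
  refine ⟨Nat.find hmin, hrn, hrmin, fun m hm => ?_⟩
  obtain ⟨j, hj, hlt⟩ := not_forall₂.1 ((not_and.1 (Nat.find_min hmin hm)) (hm.trans hrn))
  exact (hrmin j hj).trans_lt (not_le.1 hlt)

theorem forall_le_add_of_first_min {f : ℕ → ℤ} (hf : ∀ m, f (m + n) = f m - 1) {r : ℕ}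
    (hmin : ∀ j < n, f r ≤ f j) (hfirst : ∀ j < r, f r < f j) :
    ∀ i < n, f r ≤ f (r + i) := by
  intro i hi
  by_cases hwrap : r + i < n
  · exact hmin _ hwrap
  · have hsplit : r + i = (r + i - n) + n := by omega
    have := hfirst (r + i - n) (by omega)
    rw [hsplit, hf]
    omega

theorem not_lt_of_forall_le_add [Preorder α] {f : ℕ → α} (hf : ∀ m, f (m + n) < f m)
    {a b : ℕ} (hb : b < n) (ha : ∀ i < n, f a ≤ f (a + i)) (hb' : ∀ i < n, f b ≤ f (b + i)) :
    ¬ a < b := by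
  intro hab
  have h₁ := ha (b - a) (by omega)
  have h₂ := hb' (a + n - b) (by omega)
  rw [Nat.add_sub_cancel' hab.le] at h₁
  rw [show b + (a + n - b) = a + n by omega] at h₂
  exact (h₁.trans h₂).not_gt (hf a)

end FirstMinimum

section CyclicPartialSum

variable {M : Type*} [AddCommMonoid M] (k : ℕ → M) (n : ℕ)

def cyclicPartialSum (m : ℕ) : M :=
  ∑ j ∈ range m, k (j % n)

theorem cyclicPartialSum_add (a b : ℕ) :
    cyclicPartialSum k n (a + b) =
      cyclicPartialSum k n a + ∑ j ∈ range b, k ((j + a) % n) := by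
  rw [cyclicPartialSum, sum_range_add]
  simp only [add_comm a, cyclicPartialSum]

theorem cyclicPartialSum_self : cyclicPartialSum k n n = ∑ j ∈ range n, k j :=
  sum_congr rfl fun j hj => by rw [Nat.mod_eq_of_lt (mem_range.1 hj)]

theorem cyclicPartialSum_add_self (m : ℕ) :
    cyclicPartialSum k n (m + n) = cyclicPartialSum k n m + ∑ j ∈ range n, k j := by
  simp only [add_comm m, cyclicPartialSum_add, Nat.add_mod_right, cyclicPartialSum_self]
  rw [cyclicPartialSum, add_comm]

end CyclicPartialSum

theorem cycle_lemma_general (n : ℕ) (hn : 0 < n) (k : ℕ → ℤ)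
    (hsum : ∑ i ∈ Finset.range n, k i = -1) :
    ∃! r : Fin n,
      (∀ i : ℕ, 1 ≤ i → i ≤ n - 1 →
        0 ≤ ∑ j ∈ Finset.range i, k ((j + r.val) % n)) ∧
      ∑ j ∈ Finset.range n, k ((j + r.val) % n) = -1 := by
  set T := cyclicPartialSum k n with hTdef
  have hT : ∀ m, T (m + n) = T m - 1 := fun m => by
    rw [hTdef, cyclicPartialSum_add_self, hsum, sub_eq_add_neg]
  have hrot : ∀ r i, ∑ j ∈ range i, k ((j + r) % n) = T (r + i) - T r := fun r i => by
    rw [hTdef, cyclicPartialSum_add, add_sub_cancel_left]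
  have hadmissible : ∀ r : Fin n,
      ((∀ i : ℕ, 1 ≤ i → i ≤ n - 1 → 0 ≤ ∑ j ∈ range i, k ((j + r.val) % n)) ∧
        ∑ j ∈ range n, k ((j + r.val) % n) = -1) ↔ ∀ i < n, T r ≤ T (r + i) := by
    intro r
    simp only [hrot, hT, sub_nonneg]
    refine ⟨fun h i hi => ?_, fun h => ⟨fun i hi₁ hi₂ => h i (by omega), by ring⟩⟩
    rcases Nat.eq_zero_or_pos i with rfl | hi₀
    · rfl
    · exact h.1 i hi₀ (by omega)
  obtain ⟨r, hrn, hmin, hfirst⟩ := exists_first_min_lt T hn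
  have hr := forall_le_add_of_first_min hT hmin hfirst
  have hstep : ∀ m, T (m + n) < T m := fun m => by rw [hT]; omega
  refine ⟨⟨r, hrn⟩, (hadmissible _).2 hr, fun s hs => Fin.ext ?_⟩
  have hs' := (hadmissible s).1 hs
  exact le_antisymm (not_lt.1 (not_lt_of_forall_le_add hstep s.isLt hr hs'))
    (not_lt.1 (not_lt_of_forall_le_add hstep hrn hs' hr))

/-- Cycle lemma (Dvoretzky–Motzkin).  Let `k_1, …, k_n` be integers,
each `≥ -1`, with `k_1 + ⋯ + k_n = -1`.  There is exactly one cyclic shift `r`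
such that the partial sums of the rotated sequence satisfy `S_i ≥ 0` for all
`1 ≤ i ≤ n-1` and `S_n = -1`. -/
theorem cycle_lemma (n : ℕ) (hn : 0 < n) (k : ℕ → ℤ)
    (hk : ∀ i < n, -1 ≤ k i)
    (hsum : ∑ i ∈ Finset.range n, k i = -1) :
    ∃! r : Fin n,
      (∀ i : ℕ, 1 ≤ i → i ≤ n - 1 →
        0 ≤ ∑ j ∈ Finset.range i, k ((j + r.val) % n)) ∧
      ∑ j ∈ Finset.range n, k ((j + r.val) % n) = -1 :=
  cycle_lemma_general n hn k hsum
end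

section
/- Kemperman's formula: Let ξ_1, ..., ξ_n be i.i.d. integer-valued random variables with ξ_i ≥ -1 almost surely, and S_i = ξ_1 + ... + ξ_i. Then P(S_i ≥ 0 for all 1 ≤ i ≤ n-1 and S_n = -1) = (1/n)·P(S_n = -1). -/
open MeasureTheory ProbabilityTheory

/-! For steps `x_0, …, x_{n-1}` summing to `-1`, exactly one cyclic rotation is good, namely the
one starting at the first time in `[0, n)` at which the walk attains its minimum (cycle lemma).
Hence `{S_n = -1}` is the disjoint union of the `n` events "the rotation by `k` of `(ξ_0, …, ξ_{n-1})`
is good", and since the steps are i.i.d. each rotated vector has the same law as the vector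
itself, so all `n` events have the probability of the good event. -/

theorem existsUnique_isFirstMin {ι α : Type*} [LinearOrder ι] [LinearOrder α] [Fintype ι]
    [Nonempty ι] (f : ι → α) :
    ∃! k, ∀ m, f k ≤ f m ∧ (m < k → f k < f m) := by
  classical
  obtain ⟨b, -, hb⟩ := Finset.univ.exists_min_image f Finset.univ_nonempty
  set s := Finset.univ.filter fun m => ∀ m', f m ≤ f m'
  have hs : s.Nonempty := ⟨b, by simpa [s] using hb⟩
  set k := s.min' hs
  have hmin : ∀ m, f k ≤ f m := by simpa [s] using s.min'_mem hs
  have hk : ∀ m, f k ≤ f m ∧ (m < k → f k < f m) := fun m =>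
    ⟨hmin m, fun hm => lt_of_not_ge fun hle =>
      (s.min'_le m (by simpa [s] using fun m' => hle.trans (hmin m'))).not_gt hm⟩
  refine ⟨k, hk, fun k' hk' => ?_⟩
  rcases lt_trichotomy k' k with h | h | h
  · exact absurd (hk' k).1 ((hk k').2 h).not_ge
  · exact h
  · exact absurd (hk k').1 ((hk' k).2 h).not_ge

namespace Kemperman

open Fin.NatCast

variable {n : ℕ} [NeZero n]

/-- The walk with steps `x` repeated periodically: step `j` is `x (j mod n)`. -/
def partialSum (x : Fin n → ℤ) (m : ℕ) : ℤ := ∑ j ∈ Finset.range m, x j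

def goodSet (n : ℕ) [NeZero n] : Set (Fin n → ℤ) :=
  {x | (∀ i : ℕ, 1 ≤ i → i ≤ n - 1 → 0 ≤ partialSum x i) ∧ partialSum x n = -1}

def rotate (k : Fin n) (x : Fin n → ℤ) : Fin n → ℤ := fun i => x (i + k)

theorem partialSum_add (x : Fin n → ℤ) (a b : ℕ) :
    partialSum x (a + b) =
      partialSum x a + ∑ j ∈ Finset.range b, x ((a : Fin n) + (j : Fin n)) := by
  rw [partialSum, Finset.sum_range_add]
  push_cast
  rfl

theorem partialSum_eq_sum_univ (x : Fin n → ℤ) : partialSum x n = ∑ i, x i := by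
  rw [partialSum, ← Fin.sum_univ_eq_sum_range (fun j => x (j : Fin n)) n]
  simp only [Fin.cast_val_eq_self]

theorem partialSum_add_period (x : Fin n → ℤ) (a : ℕ) :
    partialSum x (a + n) = partialSum x a + partialSum x n := by
  rw [partialSum_add, partialSum_eq_sum_univ, ← Fin.sum_univ_eq_sum_range (fun j => x (_ + j)) n]
  simp only [Fin.cast_val_eq_self]
  exact congrArg _ (Equiv.sum_comp (Equiv.addLeft (a : Fin n)) x)

theorem partialSum_rotate (k : Fin n) (x : Fin n → ℤ) (m : ℕ) :
    partialSum (rotate k x) m = partialSum x (k + m) - partialSum x k := by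
  rw [partialSum_add, Fin.cast_val_eq_self, partialSum]
  simp only [rotate, add_comm k]
  ring

theorem partialSum_rotate_period (k : Fin n) (x : Fin n → ℤ) :
    partialSum (rotate k x) n = partialSum x n := by
  rw [partialSum_rotate, partialSum_add_period]
  ring

theorem rotate_mem_goodSet_iff {x : Fin n → ℤ} (hx : partialSum x n = -1) (k : Fin n) :
    rotate k x ∈ goodSet n ↔ ∀ m : Fin n,
      partialSum x k ≤ partialSum x m ∧ (m < k → partialSum x k < partialSum x m) := by
  have hwrap (m : ℕ) : partialSum x (m + n) = partialSum x m - 1 := by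
    rw [partialSum_add_period, hx]; ring
  have hk := k.isLt
  simp only [goodSet, Set.mem_ofPred_eq, partialSum_rotate_period, hx, and_true,
    partialSum_rotate, sub_nonneg, Fin.lt_def]
  constructor
  · intro h m
    have hm := m.isLt
    have hlt (hmk : (m : ℕ) < k) : partialSum x k < partialSum x m := by
      have := h (m + n - k) (by omega) (by omega)
      rw [show (k : ℕ) + (m + n - k) = m + n by omega, hwrap] at this
      omega
    refine ⟨?_, hlt⟩
    rcases lt_trichotomy (m : ℕ) k with hmk | hmk | hmk
    · exact (hlt hmk).le
    · rw [hmk]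
    · simpa [show (k : ℕ) + (m - k) = m by omega] using h (m - k) (by omega) (by omega)
  · intro h i hi hin
    rcases lt_or_ge ((k : ℕ) + i) n with hkin | hkin
    · exact (h ⟨k + i, hkin⟩).1
    · have : partialSum x k < partialSum x (k + i - n) :=
        (h ⟨k + i - n, by omega⟩).2 (show (k : ℕ) + i - n < k by omega)
      rw [show (k : ℕ) + i = (k + i - n) + n by omega, hwrap]
      omega

theorem existsUnique_rotate_mem_goodSet {x : Fin n → ℤ} (hx : partialSum x n = -1) :
    ∃! k : Fin n, rotate k x ∈ goodSet n := by
  simpa only [rotate_mem_goodSet_iff hx] using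
    existsUnique_isFirstMin fun m : Fin n => partialSum x m

theorem setOf_partialSum_eq_neg_one_eq_iUnion :
    {x : Fin n → ℤ | partialSum x n = -1} = ⋃ k : Fin n, rotate k ⁻¹' goodSet n := by
  ext x
  simp only [Set.mem_ofPred_eq, Set.mem_iUnion, Set.mem_preimage]
  refine ⟨fun hx => (existsUnique_rotate_mem_goodSet hx).exists, fun ⟨k, hk⟩ => ?_⟩
  rw [← partialSum_rotate_period k]
  exact hk.2

theorem pairwise_disjoint_preimage_rotate_goodSet :
    Pairwise (Function.onFun Disjoint fun k : Fin n => rotate k ⁻¹' goodSet n) := by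
  intro k k' hne
  refine Set.disjoint_left.2 fun x hk hk' => hne ?_
  have hx : partialSum x n = -1 := by
    rw [← partialSum_rotate_period k]
    exact hk.2
  exact (existsUnique_rotate_mem_goodSet hx).unique hk hk'

theorem measure_partialSum_eq_neg_one {ν : Measure (Fin n → ℤ)}
    (hν : ∀ k, ν.map (rotate k) = ν) :
    ν {x | partialSum x n = -1} = n * ν (goodSet n) := by
  rw [setOf_partialSum_eq_neg_one_eq_iUnion,
    measure_iUnion pairwise_disjoint_preimage_rotate_goodSet fun _ => .of_discrete, tsum_fintype]
  simp only [← Measure.map_apply .of_discrete .of_discrete, hν, Finset.sum_const,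
    Finset.card_univ, Fintype.card_fin, nsmul_eq_mul]

end Kemperman

theorem ProbabilityTheory.iIndepFun.map_comp_eq_pi {Ω ι κ α : Type*} [MeasurableSpace Ω]
    [MeasurableSpace α] [Fintype ι] {P : Measure Ω} {ξ : κ → Ω → α} {μ : Measure α}
    (hmeas : ∀ i, Measurable (ξ i)) (hindep : iIndepFun ξ P) (hident : ∀ i, P.map (ξ i) = μ)
    {g : ι → κ} (hg : g.Injective) :
    P.map (fun ω i => ξ (g i) ω) = Measure.pi fun _ => μ := by
  rw [(hindep.precomp hg).map_fun_eq_pi_map fun i => (hmeas _).aemeasurable]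
  simp only [hident]

open Kemperman in
theorem kemperman_formula_general {Ω : Type*} [MeasurableSpace Ω] (P : Measure Ω)
    (n : ℕ)
    (ξ : ℕ → Ω → ℤ) (hmeas : ∀ i, Measurable (ξ i))
    (hindep : iIndepFun ξ P)
    (hident : ∀ i, Measure.map (ξ i) P = Measure.map (ξ 0) P)
    (S : ℕ → Ω → ℤ) (hS : ∀ i ω, S i ω = ∑ j ∈ Finset.range i, ξ j ω) :
    P {ω | (∀ i : ℕ, 1 ≤ i → i ≤ n - 1 → 0 ≤ S i ω) ∧ S n ω = -1}
      = (n : ENNReal)⁻¹ * P {ω | S n ω = -1} := by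
  rcases n.eq_zero_or_pos with rfl | hn
  · -- `S 0 = 0`, so both events are empty, and `0⁻¹ * 0 = ⊤ * 0 = 0` in `ℝ≥0∞`
    simp [hS]
  have : NeZero n := ⟨hn.ne'⟩
  set V : Ω → Fin n → ℤ := fun ω i => ξ i ω
  have hV : Measurable V := measurable_pi_lambda _ fun i => hmeas i
  have hlaw (k : Fin n) : (P.map V).map (rotate k) = P.map V := by
    have hshift : Function.Injective fun i : Fin n => ((i + k : Fin n) : ℕ) :=
      Fin.val_injective.comp (add_left_injective k)
    rw [Measure.map_map .of_discrete hV]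
    exact (hindep.map_comp_eq_pi hmeas hident hshift).trans
      (hindep.map_comp_eq_pi hmeas hident Fin.val_injective).symm
  have hSV (ω : Ω) {i : ℕ} (hi : i ≤ n) : partialSum (V ω) i = S i ω := by
    rw [hS, partialSum]
    refine Finset.sum_congr rfl fun j hj => ?_
    simp only [V, Fin.val_cast_of_lt ((Finset.mem_range.1 hj).trans_le hi)]
  have hgood : {ω | (∀ i : ℕ, 1 ≤ i → i ≤ n - 1 → 0 ≤ S i ω) ∧ S n ω = -1}
      = V ⁻¹' goodSet n := by
    ext ω
    refine and_congr (forall₃_congr fun i _ hi => ?_) ?_ <;> rw [hSV] <;> omega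
  have hend : {ω | S n ω = -1} = V ⁻¹' {x | partialSum x n = -1} := by
    ext ω
    simp only [Set.mem_ofPred_eq, Set.mem_preimage, hSV ω le_rfl]
  rw [hgood, hend, ← Measure.map_apply hV .of_discrete, ← Measure.map_apply hV .of_discrete,
    measure_partialSum_eq_neg_one hlaw, ← mul_assoc,
    ENNReal.inv_mul_cancel (by exact_mod_cast hn.ne') (ENNReal.natCast_ne_top n), one_mul]

/-- Kemperman's formula (hitting time theorem).  For i.i.d.
integer-valued steps `ξ_i ≥ -1` a.s. and `S_i = ξ_1 + ⋯ + ξ_i`,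
`P(S_i ≥ 0 for all 1 ≤ i ≤ n-1 and S_n = -1) = (1/n) P(S_n = -1)`. -/
theorem kemperman_formula {Ω : Type*} [MeasurableSpace Ω] (P : Measure Ω)
    [IsProbabilityMeasure P]
    (n : ℕ) (hn : 1 ≤ n)
    (ξ : ℕ → Ω → ℤ) (hmeas : ∀ i, Measurable (ξ i))
    (hindep : iIndepFun ξ P)
    (hident : ∀ i, Measure.map (ξ i) P = Measure.map (ξ 0) P)
    (hlb : ∀ i, ∀ᵐ ω ∂P, -1 ≤ ξ i ω)
    (S : ℕ → Ω → ℤ) (hS : ∀ i ω, S i ω = ∑ j ∈ Finset.range i, ξ j ω) :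
    P {ω | (∀ i : ℕ, 1 ≤ i → i ≤ n - 1 → 0 ≤ S i ω) ∧ S n ω = -1}
      = (n : ENNReal)⁻¹ * P {ω | S n ω = -1} :=
  kemperman_formula_general P n ξ hmeas hindep hident S hS
end

section
/- Change of measure for mutation counts in a continuous-time Markov chain: consider a continuous-time Markov chain X on ℕ absorbed at 0, with transition rates from i: up-rate i (to i+1), mutation down-rate μ·i (to i-1), and plain down-rate (α + (i-1)β)·i (to i-1), started at 1, and let M be the number of mutation transitions and L = ∫_0^∞ X_t dt. Then for every s > 0 and every nonnegative measurable functional f of the trajectory, E_μ[f(X)·s^M] = E_{sμ}[f(X)·e^{(s-1)μL}], where E_μ and E_{sμ} denote expectation under mutation rates μ and sμ respectively (other rates unchanged). -/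
open MeasureTheory

/-- Transition rate of the logistic branching process with mutation rate `μ`
from state `i` to state `j`, for a transition marked (`mark = true`: mutation)
or unmarked: up-rate `i` to `i+1`, mutation down-rate `μ·i` to `i-1`, plain
down-rate `(α + (i-1)β)·i` to `i-1`. -/
noncomputable def jumpRate (α β μ : ℝ) (i j : ℕ) (mark : Bool) : ℝ :=
  if mark then (if j + 1 = i then μ * i else 0)
  else if j = i + 1 then (i : ℝ)
  else if j + 1 = i then (α + ((i : ℝ) - 1) * β) * (i : ℝ)
  else 0

/-- Total jump rate out of state `i`: `q_i = (1 + ρ_i) i` with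
`ρ_i = α + μ + (i-1)β`. -/
noncomputable def totalRate (α β μ : ℝ) (i : ℕ) : ℝ :=
  (1 + (α + μ + ((i : ℝ) - 1) * β)) * (i : ℝ)

/-- Expectation of a functional of the marked chain: trajectories with `n`
jumps are encoded by the visited states `x : Fin (n+1) → ℕ` (started at `1`,
absorbed at `0`), the marks `b : Fin n → Bool` and the holding times
`t : Fin n → ℝ`; the density of a trajectory is the product of its transition
rates and of `exp(-q_{x_k} t_k)` over the holding times. -/
noncomputable def pathExpectation (α β μ : ℝ)
    (g : (n : ℕ) → (Fin (n + 1) → ℕ) → (Fin n → Bool) → (Fin n → ℝ) → ℝ) : ℝ :=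
  ∑' n : ℕ, ∑' x : Fin (n + 1) → ℕ, ∑' b : Fin n → Bool,
    ∫ t in Set.univ.pi (fun _ : Fin n => Set.Ici (0 : ℝ)),
      (if x 0 = 1 ∧ x (Fin.last n) = 0 then (1 : ℝ) else 0) *
        g n x b t *
        ∏ i : Fin n,
          (jumpRate α β μ (x i.castSucc) (x i.succ) (b i) *
            Real.exp (-(totalRate α β μ (x i.castSucc)) * t i))

/- Raising the mutation rate from `μ` to `s μ` multiplies every mutation jump rate by `s` and
adds `(s - 1) μ x_k` to the exit rate of each visited state, so the path densities differ by the
factor `s^M e^{-(s-1) μ L}`, pointwise on every trajectory. -/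

lemma jumpRate_mul_mutation (α β μ s : ℝ) (i j : ℕ) (mark : Bool) :
    (if mark then s else 1) * jumpRate α β μ i j mark = jumpRate α β (s * μ) i j mark := by
  cases mark <;> simp only [jumpRate, Bool.false_eq_true, if_true, if_false] <;> split_ifs <;> ring

lemma exp_neg_totalRate_eq (α β μ s u : ℝ) (i : ℕ) :
    Real.exp (-(totalRate α β μ i) * u) =
      Real.exp ((s - 1) * μ * ((i : ℝ) * u)) * Real.exp (-(totalRate α β (s * μ) i) * u) := by
  rw [← Real.exp_add]
  congr 1
  simp only [totalRate]
  ring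

lemma holding_factor_mul_mutation (α β μ s u : ℝ) (i j : ℕ) (mark : Bool) :
    (if mark then s else 1) * (jumpRate α β μ i j mark * Real.exp (-(totalRate α β μ i) * u)) =
      Real.exp ((s - 1) * μ * ((i : ℝ) * u)) *
        (jumpRate α β (s * μ) i j mark * Real.exp (-(totalRate α β (s * μ) i) * u)) := by
  rw [← jumpRate_mul_mutation α β μ s, exp_neg_totalRate_eq α β μ s u]
  ring

lemma pow_card_mutations_mul_density {n : ℕ} (α β μ s : ℝ) (x : Fin (n + 1) → ℕ)
    (b : Fin n → Bool) (t : Fin n → ℝ) :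
    s ^ (Finset.univ.filter (fun i : Fin n => b i = true)).card *
        ∏ i : Fin n, (jumpRate α β μ (x i.castSucc) (x i.succ) (b i) *
          Real.exp (-(totalRate α β μ (x i.castSucc)) * t i)) =
      Real.exp ((s - 1) * μ * ∑ i : Fin n, ((x i.castSucc : ℝ) * t i)) *
        ∏ i : Fin n, (jumpRate α β (s * μ) (x i.castSucc) (x i.succ) (b i) *
          Real.exp (-(totalRate α β (s * μ) (x i.castSucc)) * t i)) := by
  have hpow : s ^ (Finset.univ.filter (fun i : Fin n => b i = true)).card =
      ∏ i : Fin n, (if b i then s else 1) := by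
    rw [← Finset.prod_const, Finset.prod_filter]
  rw [hpow, Finset.mul_sum, Real.exp_sum, ← Finset.prod_mul_distrib, ← Finset.prod_mul_distrib]
  exact Finset.prod_congr rfl fun i _ => holding_factor_mul_mutation α β μ s (t i) _ _ _

theorem mutation_change_of_measure_general (α β μ s : ℝ)
    (f : (n : ℕ) → (Fin (n + 1) → ℕ) → (Fin n → ℝ) → ℝ) :
    pathExpectation α β μ (fun n x b t =>
        f n x t * s ^ (Finset.univ.filter (fun i : Fin n => b i = true)).card)
      = pathExpectation α β (s * μ) (fun n x _b t =>
        f n x t * Real.exp ((s - 1) * μ * ∑ i : Fin n, ((x i.castSucc : ℝ) * t i))) := by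
  refine tsum_congr fun n => tsum_congr fun x => tsum_congr fun b => ?_
  refine integral_congr_ae (Filter.Eventually.of_forall fun t => ?_)
  simp only [mul_assoc, pow_card_mutations_mul_density]

/-- change of measure for mutation counts.  For every `s > 0` and
every nonnegative measurable functional `f` of the (unmarked) trajectory,
`E_μ[f(X) s^M] = E_{sμ}[f(X) e^{(s-1)μL}]`, where `M` is the number of
mutation transitions and `L = ∫ X_t dt = ∑ x_k t_k`. -/
theorem mutation_change_of_measure (α β μ s : ℝ)
    (hα : 0 < α) (hβ : 0 < β) (hμ : 0 < μ) (hs : 0 < s)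
    (f : (n : ℕ) → (Fin (n + 1) → ℕ) → (Fin n → ℝ) → ℝ)
    (hfnn : ∀ n x t, 0 ≤ f n x t)
    (hfmeas : ∀ n x, Measurable (f n x)) :
    pathExpectation α β μ (fun n x b t =>
        f n x t * s ^ (Finset.univ.filter (fun i : Fin n => b i = true)).card)
      = pathExpectation α β (s * μ) (fun n x _b t =>
        f n x t * Real.exp ((s - 1) * μ * ∑ i : Fin n, ((x i.castSucc : ℝ) * t i))) :=
  mutation_change_of_measure_general α β μ s f
end
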